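/- Fix b ∈ {1,…,B}. If δ(b,v) ≤ −(r(v+1) − r(v)) for all v ∈ {1,…,V−1}, then the map v ↦ μ(b,v) is non-increasing on {1,…,V}. -/

import Mathlib

/-- `delta S hS c h r b v` is δ(b,v): δ(b,0) = 0 and
δ(b,v) = h(b) + min_{s ∈ S} (c(s) − s·(r(v) + Σ_{i=0}^{v−1} δ(b,i))). -/
noncomputable def delta (S : Finset ℝ) (hS : S.Nonempty) (c : ℝ → ℝ) (h r : ℕ → ℝ)
    (b : ℕ) : ℕ → ℝ
  | 0 => 0
  | v + 1 => h b + S.inf' hS (fun s =>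
      c s - s * (r (v + 1) + ∑ i ∈ (Finset.range (v + 1)).attach, delta S hS c h r b i.1))
decreasing_by exact Finset.mem_range.mp i.2

/-- `sigma S hS c h r b v` is σ(b,v) = Σ_{i=0}^{v} δ(b,i). -/
noncomputable def sigma (S : Finset ℝ) (hS : S.Nonempty) (c : ℝ → ℝ) (h r : ℕ → ℝ)
    (b v : ℕ) : ℝ :=
  ∑ i ∈ Finset.range (v + 1), delta S hS c h r b i

open Classical

/-- `gmin S hS c x` = the least element of the set of minimizers over s ∈ S of c(s) − s·x. -/
noncomputable def gmin (S : Finset ℝ) (hS : S.Nonempty) (c : ℝ → ℝ) (x : ℝ) : ℝ :=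
  (S.filter (fun s => ∀ s' ∈ S, c s - s * x ≤ c s' - s' * x)).min'
    (by
      obtain ⟨s, hs, hmin⟩ := S.exists_min_image (fun s => c s - s * x) hS
      exact ⟨s, Finset.mem_filter.mpr ⟨hs, fun s' hs' => hmin s' hs'⟩⟩)

/-- μ(b,v) = g(r(v) + σ(b,v−1)). -/
noncomputable def mu (S : Finset ℝ) (hS : S.Nonempty) (c : ℝ → ℝ) (h r : ℕ → ℝ)
    (b v : ℕ) : ℝ :=
  gmin S hS c (r v + sigma S hS c h r b (v - 1))

/-! The least minimizer `g(x)` of `c(s) - s·x` is monotone in `x`, and the hypothesis on `δ` says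
that the argument `r(v) + σ(b, v-1)` of `μ(b, v) = g(·)` does not increase from `v` to
`v + 1`, since `σ(b, v) = σ(b, v-1) + δ(b, v)`. -/

section

variable (S : Finset ℝ) (hS : S.Nonempty) (c : ℝ → ℝ)

lemma gmin_mem_and_isMinOn (x : ℝ) :
    gmin S hS c x ∈ S ∧ IsMinOn (fun s => c s - s * x) S (gmin S hS c x) :=
  have hfilter := Finset.mem_filter.mp (Finset.min'_mem _ _ : gmin S hS c x ∈ _)
  ⟨hfilter.1, isMinOn_iff.mpr hfilter.2⟩

lemma gmin_mono : Monotone (gmin S hS c) := by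
  intro x y hxy
  rcases hxy.eq_or_lt with rfl | hxy
  · exact le_rfl
  obtain ⟨hs_mem, hs_min⟩ := gmin_mem_and_isMinOn S hS c x
  obtain ⟨ht_mem, ht_min⟩ := gmin_mem_and_isMinOn S hS c y
  set s := gmin S hS c x
  set t := gmin S hS c y
  have hs_le : c s - s * x ≤ c t - t * x := hs_min ht_mem
  have ht_le : c t - t * y ≤ c s - s * y := ht_min hs_mem
  by_contra! hts
  -- adding the two optimality inequalities gives `(s - t) * (y - x) ≤ 0`
  nlinarith [mul_pos (sub_pos.mpr hts) (sub_pos.mpr hxy)]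

variable (h r : ℕ → ℝ) (b : ℕ)

lemma sigma_succ (v : ℕ) :
    sigma S hS c h r b (v + 1) = sigma S hS c h r b v + delta S hS c h r b (v + 1) :=
  Finset.sum_range_succ _ _

lemma mu_antitoneOn_Icc {V : ℕ}
    (hdelta : ∀ v, 1 ≤ v → v + 1 ≤ V → delta S hS c h r b v ≤ -(r (v + 1) - r v)) :
    AntitoneOn (mu S hS c h r b) (Set.Icc 1 V) := by
  have hargument : AntitoneOn (fun v => r v + sigma S hS c h r b (v - 1)) (Set.Icc 1 V) := by
    refine antitoneOn_of_add_one_le Set.ordConnected_Icc fun v _ hv hv1 => ?_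
    obtain ⟨w, rfl⟩ := Nat.exists_eq_add_of_le' hv.1
    have hdelta_w := hdelta (w + 1) hv.1 hv1.2
    simp only [Nat.add_sub_cancel, sigma_succ]
    linarith
  exact (gmin_mono S hS c).comp_antitoneOn hargument

end

theorem stmt11_general
    (S : Finset ℝ) (hS : S.Nonempty) (c : ℝ → ℝ) (h : ℕ → ℝ) (r : ℕ → ℝ) (V : ℕ) (b : ℕ)
    (hdelta : ∀ v, 1 ≤ v → v + 1 ≤ V →
      delta S hS c h r b v ≤ -(r (v + 1) - r v)) :
    ∀ v v', 1 ≤ v → v ≤ v' → v' ≤ V →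
      mu S hS c h r b v' ≤ mu S hS c h r b v :=
  fun _ _ hv hvv' hv'V =>
    mu_antitoneOn_Icc S hS c h r b hdelta ⟨hv, hvv'.trans hv'V⟩ ⟨hv.trans hvv', hv'V⟩ hvv'

/-- Fix b ∈ {1,…,B}. If δ(b,v) ≤ −(r(v+1) − r(v)) for all v ∈ {1,…,V−1},
then v ↦ μ(b,v) is non-increasing on {1,…,V}. -/
theorem stmt11
    (S : Finset ℝ) (hS : S.Nonempty) (hS01 : ∀ s ∈ S, s ∈ Set.Icc (0 : ℝ) 1)
    (c : ℝ → ℝ) (hc0 : ∀ s ∈ S, 0 ≤ c s)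
    (hcmono : ∀ s ∈ S, ∀ s' ∈ S, s ≤ s' → c s ≤ c s')
    (h : ℕ → ℝ) (hh0 : ∀ b, 0 ≤ h b) (hhmono : Monotone h)
    (r : ℕ → ℝ) (hrmono : Monotone r) (hr0 : r 0 = 0) (hrpos : ∀ v, 1 ≤ v → 0 < r v)
    (B V : ℕ) (hB : 0 < B) (hV : 0 < V)
    (b : ℕ) (hb1 : 1 ≤ b) (hbB : b ≤ B)
    (hdelta : ∀ v, 1 ≤ v → v + 1 ≤ V →
      delta S hS c h r b v ≤ -(r (v + 1) - r v)) :
    ∀ v v', 1 ≤ v → v ≤ v' → v' ≤ V →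
      mu S hS c h r b v' ≤ mu S hS c h r b v :=
  stmt11_general S hS c h r V b hdelta
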